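/- Let A be a strictly semi-positive real tensor of order m and dimension n (with m ≥ 2, n ≥ 1), and let β(A) := min over { x ∈ ℝⁿ : x ≥ 0, ‖x‖_∞ = 1 } of max_{1 ≤ i ≤ n} x_i·(A x^{m-1})_i. If x is a solution of the tensor complementarity problem TCP(A,q) for some q ∈ ℝⁿ, then ‖x‖_∞^{m-1} ≤ ‖(−q)₊‖_∞ / β(A), where (−q)₊ is the componentwise positive part of −q. -/

import Mathlib

open Finset

/-- The `i`-th component of `A x^{m-1}` for a real tensor `A` of order `m = k+1`
and dimension `n`. -/
def tmul {n k : ℕ} (A : (Fin (k + 1) → Fin n) → ℝ) (x : Fin n → ℝ) : Fin n → ℝ :=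
  fun i => ∑ f : Fin k → Fin n, A (Fin.cons i f) * ∏ j, x (f j)

/-- `A x^m := xᵀ (A x^{m-1})`. -/
def tpow {n k : ℕ} (A : (Fin (k + 1) → Fin n) → ℝ) (x : Fin n → ℝ) : ℝ :=
  ∑ i, x i * tmul A x i

/-- `x` is a solution of the tensor complementarity problem TCP(A, q). -/
def TCPSol {n k : ℕ} (A : (Fin (k + 1) → Fin n) → ℝ) (q x : Fin n → ℝ) : Prop :=
  (∀ i, 0 ≤ x i) ∧ (∀ i, 0 ≤ q i + tmul A x i) ∧ ∑ i, x i * (q i + tmul A x i) = 0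

/-- `A` is an S-tensor: the system `A x^{m-1} > 0, x > 0` has a solution. -/
def STensor {n k : ℕ} (A : (Fin (k + 1) → Fin n) → ℝ) : Prop :=
  ∃ x : Fin n → ℝ, (∀ i, 0 < x i) ∧ ∀ i, 0 < tmul A x i

/-- `A` is strictly semi-positive. -/
def StrictlySemiPositive {n k : ℕ} (A : (Fin (k + 1) → Fin n) → ℝ) : Prop :=
  ∀ x : Fin n → ℝ, (∀ i, 0 ≤ x i) → x ≠ 0 → ∃ j, 0 < x j ∧ 0 < tmul A x j

/-- `A` is an R₀-tensor: `x = 0` is the unique solution of TCP(A, 0). -/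
def R0Tensor {n k : ℕ} (A : (Fin (k + 1) → Fin n) → ℝ) : Prop :=
  ∀ x : Fin n → ℝ, TCPSol A (fun _ => 0) x ↔ x = 0

/-- `A` is a symmetric tensor: entries invariant under permutations of the indices. -/
def TSymmetric {n k : ℕ} (A : (Fin (k + 1) → Fin n) → ℝ) : Prop :=
  ∀ (σ : Equiv.Perm (Fin (k + 1))) (g : Fin (k + 1) → Fin n), A (g ∘ σ) = A g

/-- The `p`-norm `(∑ |x_i|^p)^{1/p}` of a vector. -/
noncomputable def pnorm {n : ℕ} (p : ℝ) (x : Fin n → ℝ) : ℝ :=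
  (∑ i, |x i| ^ p) ^ (1 / p)

/-- The `∞`-norm `max_i |x_i|` of a vector. -/
noncomputable def inftynorm {n : ℕ} (x : Fin n → ℝ) : ℝ :=
  ⨆ i, |x i|

lemma tmul_smul {n k : ℕ} (A : (Fin (k + 1) → Fin n) → ℝ) (x : Fin n → ℝ) (c : ℝ) (i : Fin n) :
    tmul A (fun j => c * x j) i = c ^ k * tmul A x i := by
  unfold tmul
  rw [Finset.mul_sum]
  refine Finset.sum_congr rfl fun f _ => ?_
  rw [Finset.prod_mul_distrib, Finset.prod_const]
  simp [Finset.card_univ]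
  ring

lemma tmul_continuous {n k : ℕ} (A : (Fin (k + 1) → Fin n) → ℝ) (i : Fin n) :
    Continuous (fun y : Fin n → ℝ => tmul A y i) := by
  unfold tmul
  exact continuous_finset_sum _ fun f _ =>
    (continuous_const.mul (continuous_finset_prod _ fun j _ => continuous_apply (f j)))

lemma beta_pos {n k : ℕ} (hn : 1 ≤ n) (A : (Fin (k + 1) → Fin n) → ℝ)
    (hssp : StrictlySemiPositive A) :
    0 < sInf {r : ℝ | ∃ y : Fin n → ℝ,
      (∀ i, 0 ≤ y i) ∧ inftynorm y = 1 ∧ (⨆ i, y i * tmul A y i) = r} ∧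
    BddBelow {r : ℝ | ∃ y : Fin n → ℝ,
      (∀ i, 0 ≤ y i) ∧ inftynorm y = 1 ∧ (⨆ i, y i * tmul A y i) = r} := by
  haveI : Nonempty (Fin n) := ⟨⟨0, hn⟩⟩
  set f : (Fin n → ℝ) → ℝ := fun y => ⨆ i, y i * tmul A y i with hf
  set K : Set (Fin n → ℝ) := {y | (∀ i, 0 ≤ y i) ∧ inftynorm y = 1} with hK
  have hSK : {r : ℝ | ∃ y : Fin n → ℝ,
      (∀ i, 0 ≤ y i) ∧ inftynorm y = 1 ∧ (⨆ i, y i * tmul A y i) = r} = f '' K := by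
    ext r
    constructor
    · rintro ⟨y, h1, h2, h3⟩; exact ⟨y, ⟨h1, h2⟩, h3⟩
    · rintro ⟨y, ⟨h1, h2⟩, h3⟩; exact ⟨y, h1, h2, h3⟩
  rw [hSK]
  have hfc : Continuous f := by
    have : f = fun y => Finset.univ.sup' Finset.univ_nonempty
        (fun i => y i * tmul A y i) := by
      funext y
      rw [Finset.sup'_univ_eq_ciSup]
    rw [this]
    exact Continuous.finset_sup'_apply Finset.univ_nonempty fun i _ =>
      (continuous_apply i).mul (tmul_continuous A i)
  have hinc : Continuous (fun y : Fin n → ℝ => inftynorm y) := by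
    have : (fun y : Fin n → ℝ => inftynorm y) =
        fun y => Finset.univ.sup' Finset.univ_nonempty (fun i => |y i|) := by
      funext y
      rw [Finset.sup'_univ_eq_ciSup]; rfl
    rw [this]
    exact Continuous.finset_sup'_apply Finset.univ_nonempty fun i _ =>
      (continuous_apply i).abs
  have hKc : IsCompact K := by
    refine IsCompact.of_isClosed_subset (isCompact_closedBall (0 : Fin n → ℝ) 1) ?_ ?_
    · have : K = (⋂ i, {y : Fin n → ℝ | 0 ≤ y i}) ∩ {y | inftynorm y = 1} := by
        ext y; simp [hK, Set.mem_iInter]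
      rw [this]
      exact IsClosed.inter (isClosed_iInter fun i =>
        isClosed_le continuous_const (continuous_apply i))
        (isClosed_eq hinc continuous_const)
    · intro y hy
      simp only [Metric.mem_closedBall, dist_zero_right]
      rw [pi_norm_le_iff_of_nonneg zero_le_one]
      intro i
      calc ‖y i‖ = |y i| := rfl
        _ ≤ inftynorm y :=
          le_ciSup (f := fun i => |y i|) (Set.Finite.bddAbove (Set.finite_range _)) i
        _ = 1 := hy.2
  have hKne : K.Nonempty := by
    refine ⟨fun _ => 1, fun i => zero_le_one, ?_⟩
    show (⨆ _ : Fin n, |(1:ℝ)|) = 1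
    simp
  have hSc : IsCompact (f '' K) := hKc.image hfc
  have hSne : (f '' K).Nonempty := hKne.image f
  refine ⟨?_, hSc.bddBelow⟩
  have hmem := hSc.sInf_mem hSne
  obtain ⟨y, ⟨hy1, hy2⟩, hy3⟩ := hmem
  rw [← hy3]
  have hyne : y ≠ 0 := by
    intro h
    rw [h] at hy2
    have : inftynorm (0 : Fin n → ℝ) = 0 := by
      show (⨆ _ : Fin n, |(0:ℝ)|) = 0; simp
    rw [this] at hy2; exact one_ne_zero hy2.symm
  obtain ⟨j, hj1, hj2⟩ := hssp y hy1 hyne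
  calc (0:ℝ) < y j * tmul A y j := mul_pos hj1 hj2
    _ ≤ f y := le_ciSup (f := fun i => y i * tmul A y i) (Set.Finite.bddAbove (Set.finite_range _)) j

theorem stmt10 {n k : ℕ} (hn : 1 ≤ n) (hk : 1 ≤ k) (A : (Fin (k + 1) → Fin n) → ℝ)
    (hssp : StrictlySemiPositive A) (q x : Fin n → ℝ) (hx : TCPSol A q x) :
    inftynorm x ^ k ≤
      inftynorm (fun i => max (-q i) 0) /
        sInf {r : ℝ | ∃ y : Fin n → ℝ,
          (∀ i, 0 ≤ y i) ∧ inftynorm y = 1 ∧ (⨆ i, y i * tmul A y i) = r} := by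
  haveI : Nonempty (Fin n) := ⟨⟨0, hn⟩⟩
  obtain ⟨hβ, hbdd⟩ := beta_pos hn A hssp
  set β := sInf {r : ℝ | ∃ y : Fin n → ℝ,
      (∀ i, 0 ≤ y i) ∧ inftynorm y = 1 ∧ (⨆ i, y i * tmul A y i) = r} with hβdef
  set N := inftynorm (fun i => max (-q i) 0) with hN
  have hNnn : 0 ≤ N := by
    calc (0:ℝ) ≤ |max (-q ⟨0, hn⟩) 0| := abs_nonneg _
      _ ≤ N := le_ciSup (f := fun i => |max (-q i) 0|)
        (Set.Finite.bddAbove (Set.finite_range _)) ⟨0, hn⟩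
  set t := inftynorm x with ht
  have hxi_le : ∀ i, x i ≤ t := fun i => by
    calc x i ≤ |x i| := le_abs_self _
      _ ≤ t := le_ciSup (f := fun i => |x i|) (Set.Finite.bddAbove (Set.finite_range _)) i
  have htnn : 0 ≤ t :=
    le_trans (abs_nonneg _) (le_ciSup (f := fun i => |x i|)
      (Set.Finite.bddAbove (Set.finite_range _)) ⟨0, hn⟩)
  rcases eq_or_lt_of_le htnn with h0 | ht0
  · rw [← h0, zero_pow (by omega)]
    exact div_nonneg hNnn hβ.le
  -- componentwise complementarity
  obtain ⟨hx1, hx2, hx3⟩ := hx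
  have hcomp : ∀ i, x i * (q i + tmul A x i) = 0 := by
    intro i
    have := (Finset.sum_eq_zero_iff_of_nonneg (fun i _ =>
      mul_nonneg (hx1 i) (hx2 i))).mp hx3
    exact this i (Finset.mem_univ i)
  have habs : ∀ i, |x i| = x i := fun i => abs_of_nonneg (hx1 i)
  set y : Fin n → ℝ := fun i => t⁻¹ * x i with hy
  have hy1 : ∀ i, 0 ≤ y i := fun i => mul_nonneg (inv_nonneg.mpr htnn) (hx1 i)
  have hy2 : inftynorm y = 1 := by
    show (⨆ i, |t⁻¹ * x i|) = 1
    have : ∀ i, |t⁻¹ * x i| = t⁻¹ * |x i| := fun i => by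
      rw [abs_mul, abs_of_nonneg (inv_nonneg.mpr htnn)]
    simp_rw [this]
    rw [← Real.mul_iSup_of_nonneg (inv_nonneg.mpr htnn)]
    exact inv_mul_cancel₀ ht0.ne'
  -- bound on f y
  have hbound : (⨆ i, y i * tmul A y i) ≤ N / t ^ k := by
    refine ciSup_le fun i => ?_
    rw [hy]
    rw [tmul_smul A x t⁻¹ i]
    have hxq : x i * tmul A x i ≤ t * N := by
      have h1 : x i * tmul A x i = x i * (-q i) := by
        have := hcomp i; nlinarith [hcomp i]
      rw [h1]
      have h2 : -q i ≤ max (-q i) 0 := le_max_left _ _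
      have h3 : max (-q i) 0 ≤ N := by
        calc max (-q i) 0 = |max (-q i) 0| := (abs_of_nonneg (le_max_right _ _)).symm
          _ ≤ N := le_ciSup (f := fun i => |max (-q i) 0|)
            (Set.Finite.bddAbove (Set.finite_range _)) i
      calc x i * (-q i) ≤ x i * N := by
            rcases eq_or_lt_of_le (hx1 i) with h | h
            · rw [← h]; simp
            · exact mul_le_mul_of_nonneg_left (h2.trans h3) (hx1 i)
        _ ≤ t * N := mul_le_mul_of_nonneg_right (hxi_le i) hNnn
    have hrw : t⁻¹ * x i * (t⁻¹ ^ k * tmul A x i)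
        = t⁻¹ ^ (k + 1) * (x i * tmul A x i) := by ring
    rw [hrw]
    calc t⁻¹ ^ (k + 1) * (x i * tmul A x i) ≤ t⁻¹ ^ (k + 1) * (t * N) :=
          mul_le_mul_of_nonneg_left hxq (pow_nonneg (inv_nonneg.mpr htnn) _)
      _ = N / t ^ k := by rw [pow_succ, div_eq_mul_inv, ← inv_pow, mul_assoc, ← mul_assoc t⁻¹, inv_mul_cancel₀ ht0.ne']; ring
  have hβle : β ≤ N / t ^ k :=
    (csInf_le hbdd ⟨y, hy1, hy2, rfl⟩).trans hbound
  rw [le_div_iff₀ hβ]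
  have := (le_div_iff₀ (pow_pos ht0 k)).mp hβle
  linarith
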